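/- arXiv:1609.07753 — 5 statements merged into one kernel-verified Lean document; each statement's English description precedes it below -/
import Mathlib

section
/- Let p(z) = a_0 + a_1 z + a_2 z^2 + ... + a_n z^n be a polynomial of degree n with real coefficients (so a_n ≠ 0). If for some positive numbers k and ρ with k ≥ 1 and 0 < ρ ≤ 1 the coefficients satisfy ρ·a_0 ≤ a_1 ≤ a_2 ≤ ... ≤ a_{n−1} ≤ k·a_n, then every complex zero z of p satisfies |z + k − 1| ≤ (1/|a_n|) · [(k·a_n − ρ·a_0) + |a_0|·(2 − ρ)]. -/
/-- Corollary 1 of the paper: if for some `k ≥ 1` and `0 < ρ ≤ 1` one has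
`ρ * a 0 ≤ a 1 ≤ ⋯ ≤ a (n-1) ≤ k * a n`, then every zero `z` of
`p(z) = ∑ a_j z^j` satisfies
`|z + k - 1| ≤ (1 / |a n|) * ((k * a n - ρ * a 0) + |a 0| * (2 - ρ))`. -/
theorem enestrom_kakeya_gen_cor1 (n : ℕ) (hn : 1 ≤ n) (a : ℕ → ℝ) (han : a n ≠ 0)
    (k ρ : ℝ) (hk : 1 ≤ k) (hρ0 : 0 < ρ) (hρ1 : ρ ≤ 1)
    (hchain : ∀ j < n,
      (if j = 0 then ρ * a 0 else a j) ≤ (if j + 1 = n then k * a n else a (j + 1)))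
    (z : ℂ) (hz : ∑ j ∈ Finset.range (n + 1), (a j : ℂ) * z ^ j = 0) :
    ‖z + (k : ℂ) - 1‖ ≤
      (1 / |a n|) * ((k * a n - ρ * a 0) + |a 0| * (2 - ρ)) := by
  obtain ⟨m, rfl⟩ : ∃ m, n = m + 1 := ⟨n - 1, (Nat.succ_pred_eq_of_pos hn).symm⟩
  have hapos : 0 < |a (m+1)| := abs_pos.2 han
  set d : ℕ → ℝ := fun j =>
    (if j + 1 = m + 1 then k * a (m+1) else a (j + 1)) - (if j = 0 then ρ * a 0 else a j)
    with hdd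
  have hd0 : ∀ j < m + 1, 0 ≤ d j := fun j hj => sub_nonneg.2 (hchain j hj)
  -- telescoping sum of d
  have htel : ∑ j ∈ Finset.range (m+1), d j = k * a (m+1) - ρ * a 0 := by
    set g : ℕ → ℝ := fun i => if i = 0 then ρ * a 0 else if i = m + 1 then k * a (m+1) else a i
      with hgg
    have : ∑ j ∈ Finset.range (m+1), d j = ∑ j ∈ Finset.range (m+1), (g (j+1) - g j) := by
      refine Finset.sum_congr rfl fun j hj => ?_
      have hjm : j < m + 1 := Finset.mem_range.1 hj
      simp only [hdd, hgg]
      split_ifs <;> first | rfl | exact False.elim ‹False› | omega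
    rw [this, Finset.sum_range_sub]
    simp [hgg]
  have hdsum0 : 0 ≤ ∑ j ∈ Finset.range (m+1), d j :=
    Finset.sum_nonneg fun j hj => hd0 j (Finset.mem_range.1 hj)
  have hka : ρ * a 0 ≤ k * a (m+1) := by linarith [htel ▸ hdsum0]
  set M : ℂ := ∑ j ∈ Finset.range m, (a (j+1) : ℂ) * z ^ (j+1) with hM
  have hS : (a 0 : ℂ) + M + (a (m+1) : ℂ) * z ^ (m+1) = 0 := by
    rw [Finset.sum_range_succ, Finset.sum_range_succ'] at hz
    simp only [pow_zero, mul_one] at hz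
    rw [hM]
    linear_combination hz
  -- rewrite the d-sum
  have hsum : ∑ j ∈ Finset.range (m+1), (d j : ℂ) * z ^ (j+1)
      = M + ((k : ℂ) * (a (m+1) : ℂ)) * z ^ (m+1) - ((ρ : ℂ) * (a 0 : ℂ)) * z - z * M := by
    have h1 : ∑ j ∈ Finset.range (m+1), (d j : ℂ) * z ^ (j+1)
        = ∑ j ∈ Finset.range (m+1),
            (((if j + 1 = m + 1 then k * a (m+1) else a (j + 1) : ℝ) : ℂ) * z ^ (j+1)
              - ((if j = 0 then ρ * a 0 else a j : ℝ) : ℂ) * z ^ (j+1)) := by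
      refine Finset.sum_congr rfl fun j hj => ?_
      simp only [hdd]
      push_cast
      ring
    rw [h1, Finset.sum_sub_distrib]
    have h2 : ∑ j ∈ Finset.range (m+1),
        ((if j + 1 = m + 1 then k * a (m+1) else a (j + 1) : ℝ) : ℂ) * z ^ (j+1)
        = M + ((k : ℂ) * (a (m+1) : ℂ)) * z ^ (m+1) := by
      rw [Finset.sum_range_succ]
      have : ∑ j ∈ Finset.range m,
          ((if j + 1 = m + 1 then k * a (m+1) else a (j + 1) : ℝ) : ℂ) * z ^ (j+1) = M := by
        refine Finset.sum_congr rfl fun j hj => ?_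
        have : j + 1 ≠ m + 1 := by have := Finset.mem_range.1 hj; omega
        rw [if_neg this]
      rw [this, if_pos rfl]
      push_cast
      ring
    have h3 : ∑ j ∈ Finset.range (m+1),
        ((if j = 0 then ρ * a 0 else a j : ℝ) : ℂ) * z ^ (j+1)
        = ((ρ : ℂ) * (a 0 : ℂ)) * z + z * M := by
      rw [Finset.sum_range_succ']
      have : ∑ j ∈ Finset.range m,
          ((if j + 1 = 0 then ρ * a 0 else a (j+1) : ℝ) : ℂ) * z ^ (j+1+1)
          = z * M := by
        rw [hM, Finset.mul_sum]
        refine Finset.sum_congr rfl fun j hj => ?_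
        have : j + 1 ≠ 0 := by omega
        simp [this]
        ring
      rw [this]
      push_cast
      ring
    rw [h2, h3]
    ring
  -- key identity
  have key : (a (m+1) : ℂ) * z ^ (m+1) * (z + (k : ℂ) - 1)
      = (a 0 : ℂ) + ((ρ : ℂ) - 1) * (a 0 : ℂ) * z
        + ∑ j ∈ Finset.range (m+1), (d j : ℂ) * z ^ (j+1) := by
    rw [hsum]
    linear_combination (z - 1) * hS
  set A := ‖z‖ with hA
  set B := ‖z + (k : ℂ) - 1‖ with hB
  set C : ℝ := (k * a (m+1) - ρ * a 0) + |a 0| * (2 - ρ) with hC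
  rcases le_or_gt 1 A with hz1 | hz1
  · -- |z| ≥ 1
    have hA1 : (1:ℝ) ≤ A ^ (m+1) := by
      simpa using pow_le_pow_left₀ zero_le_one hz1 (m+1)
    have hApos : (0:ℝ) < A ^ (m+1) := lt_of_lt_of_le one_pos hA1
    have hsum_bound : ‖∑ j ∈ Finset.range (m+1), (d j : ℂ) * z ^ (j+1)‖
        ≤ (k * a (m+1) - ρ * a 0) * A ^ (m+1) := by
      calc ‖∑ j ∈ Finset.range (m+1), (d j : ℂ) * z ^ (j+1)‖
          ≤ ∑ j ∈ Finset.range (m+1), ‖(d j : ℂ) * z ^ (j+1)‖ :=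
            norm_sum_le _ _
        _ = ∑ j ∈ Finset.range (m+1), d j * A ^ (j+1) := by
            refine Finset.sum_congr rfl fun j hj => ?_
            rw [norm_mul, norm_pow, Complex.norm_real, Real.norm_eq_abs,
              abs_of_nonneg (hd0 j (Finset.mem_range.1 hj))]
        _ ≤ ∑ j ∈ Finset.range (m+1), d j * A ^ (m+1) := by
            refine Finset.sum_le_sum fun j hj => ?_
            exact mul_le_mul_of_nonneg_left
              (pow_le_pow_right₀ hz1 (by have := Finset.mem_range.1 hj; omega))
              (hd0 j (Finset.mem_range.1 hj))
        _ = (k * a (m+1) - ρ * a 0) * A ^ (m+1) := by rw [← Finset.sum_mul, htel]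
    have hterm0 : ‖(a 0 : ℂ)‖ ≤ |a 0| * A ^ (m+1) := by
      rw [Complex.norm_real, Real.norm_eq_abs]
      nlinarith [abs_nonneg (a 0)]
    have hterm1 : ‖((ρ : ℂ) - 1) * (a 0 : ℂ) * z‖ ≤ (1 - ρ) * |a 0| * A ^ (m+1) := by
      have he : ((ρ : ℂ) - 1) * (a 0 : ℂ) * z = (((ρ - 1) * a 0 : ℝ) : ℂ) * z := by
        push_cast; ring
      rw [he, norm_mul, Complex.norm_real, Real.norm_eq_abs, abs_mul, abs_of_nonpos (by linarith : ρ - 1 ≤ 0)]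
      have hAle : A ≤ A ^ (m+1) := by
        calc A = A ^ 1 := (pow_one A).symm
          _ ≤ A ^ (m+1) := pow_le_pow_right₀ hz1 (by omega)
      nlinarith [mul_nonneg (mul_nonneg (by linarith : (0:ℝ) ≤ 1 - ρ) (abs_nonneg (a 0)))
        (sub_nonneg.2 hAle)]
    have main : |a (m+1)| * A ^ (m+1) * B
        ≤ (|a 0| + (1 - ρ) * |a 0| + (k * a (m+1) - ρ * a 0)) * A ^ (m+1) := by
      have habs : |a (m+1)| * A ^ (m+1) * B
          = ‖(a (m+1) : ℂ) * z ^ (m+1) * (z + (k : ℂ) - 1)‖ := by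
        rw [norm_mul, norm_mul, norm_pow, Complex.norm_real, Real.norm_eq_abs]
      rw [habs, key]
      calc ‖(a 0 : ℂ) + ((ρ : ℂ) - 1) * (a 0 : ℂ) * z
            + ∑ j ∈ Finset.range (m+1), (d j : ℂ) * z ^ (j+1)‖
          ≤ ‖(a 0 : ℂ) + ((ρ : ℂ) - 1) * (a 0 : ℂ) * z‖
            + ‖∑ j ∈ Finset.range (m+1), (d j : ℂ) * z ^ (j+1)‖ :=
            norm_add_le _ _
        _ ≤ (‖(a 0 : ℂ)‖ + ‖((ρ : ℂ) - 1) * (a 0 : ℂ) * z‖)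
            + ‖∑ j ∈ Finset.range (m+1), (d j : ℂ) * z ^ (j+1)‖ :=
            add_le_add_left (norm_add_le _ _) _
        _ ≤ (|a 0| * A ^ (m+1) + (1 - ρ) * |a 0| * A ^ (m+1))
            + (k * a (m+1) - ρ * a 0) * A ^ (m+1) :=
            add_le_add (add_le_add hterm0 hterm1) hsum_bound
        _ = (|a 0| + (1 - ρ) * |a 0| + (k * a (m+1) - ρ * a 0)) * A ^ (m+1) := by ring
    have h2 : |a (m+1)| * B ≤ |a 0| + (1 - ρ) * |a 0| + (k * a (m+1) - ρ * a 0) := by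
      refine le_of_mul_le_mul_right ?_ hApos
      calc |a (m+1)| * B * A ^ (m+1) = |a (m+1)| * A ^ (m+1) * B := by ring
        _ ≤ _ := main
    rw [div_mul_eq_mul_div, one_mul, le_div_iff₀ hapos]
    rw [hC]
    nlinarith [h2]
  · -- |z| < 1
    have hBk : B < k := by
      have h1 : B ≤ A + (k - 1) := by
        have : z + (k : ℂ) - 1 = z + ((k - 1 : ℝ) : ℂ) := by push_cast; ring
        rw [hB, this]
        calc ‖z + ((k - 1 : ℝ) : ℂ)‖ ≤ A + ‖((k - 1 : ℝ) : ℂ)‖ :=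
              norm_add_le _ _
          _ = A + (k - 1) := by rw [Complex.norm_real, Real.norm_eq_abs, abs_of_nonneg (by linarith)]
      linarith
    have hkC : k * |a (m+1)| ≤ C := by
      rw [hC]
      rcases abs_cases (a (m+1)) with ⟨h1, h2⟩ | ⟨h1, h2⟩ <;>
        rcases abs_cases (a 0) with ⟨h3, h4⟩ | ⟨h3, h4⟩ <;> nlinarith
    rw [div_mul_eq_mul_div, one_mul, le_div_iff₀ hapos]
    nlinarith
end

section
/- Let p(z) = a_0 + a_1 z + a_2 z^2 + ... + a_n z^n be a polynomial of degree n with real coefficients (so a_n ≠ 0). If for some positive numbers k and ρ with k ≥ 1 and 0 < ρ ≤ 1 the coefficients satisfy 0 ≤ ρ·a_0 ≤ a_1 ≤ a_2 ≤ ... ≤ a_{n−1} ≤ k·a_n, then every complex zero z of p satisfies |z + k − 1| ≤ k + (2·a_0/a_n)·(1 − ρ). -/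
/-- Theorem D of the paper: if for some `k ≥ 1` and `0 < ρ ≤ 1` one has
`0 ≤ ρ * a 0 ≤ a 1 ≤ ⋯ ≤ a (n-1) ≤ k * a n`, then every zero `z` of
`p(z) = ∑ a_j z^j` satisfies `|z + k - 1| ≤ k + (2 a 0 / a n) * (1 - ρ)`. -/
theorem enestrom_kakeya_thmD (n : ℕ) (hn : 1 ≤ n) (a : ℕ → ℝ) (han : a n ≠ 0)
    (k ρ : ℝ) (hk : 1 ≤ k) (hρ0 : 0 < ρ) (hρ1 : ρ ≤ 1) (ha0 : 0 ≤ ρ * a 0)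
    (hchain : ∀ j < n,
      (if j = 0 then ρ * a 0 else a j) ≤ (if j + 1 = n then k * a n else a (j + 1)))
    (z : ℂ) (hz : ∑ j ∈ Finset.range (n + 1), (a j : ℂ) * z ^ j = 0) :
    ‖z + (k : ℂ) - 1‖ ≤ k + (2 * a 0 / a n) * (1 - ρ) := by
  set c : ℕ → ℝ := fun j => if j = 0 then ρ * a 0 else if j = n then k * a n else a j with hc
  have hstep : ∀ j < n, c j ≤ c (j+1) := by
    intro j hj
    have hj' : j ≠ n := Nat.ne_of_lt hj
    have h := hchain j hj
    simp only [hc]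
    rw [if_neg (Nat.succ_ne_zero j)]
    by_cases h0 : j = 0 <;> simp only [h0, if_true, if_false, if_neg hj'] <;> simpa [h0, hj'] using h
  have hmono : ∀ i j, i ≤ j → j ≤ n → c i ≤ c j := by
    intro i j hij hjn
    induction j, hij using Nat.le_induction with
    | base => exact le_rfl
    | succ j hij ih =>
      exact le_trans (ih (by omega)) (hstep j (by omega))
  have hc0 : c 0 = ρ * a 0 := by simp [hc]
  have hcn : c n = k * a n := by simp [hc, (show n ≠ 0 by omega)]
  have ha0' : 0 ≤ a 0 := by nlinarith
  have hkan : ρ * a 0 ≤ k * a n := by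
    have := hmono 0 n (Nat.zero_le n) le_rfl
    rwa [hc0, hcn] at this
  have hApos : 0 < a n := by
    rcases lt_or_eq_of_le (show (0:ℝ) ≤ a n by nlinarith) with h | h
    · exact h
    · exact absurd h.symm han
  have hbnn : 0 ≤ 2 * a 0 / a n * (1 - ρ) := by
    apply mul_nonneg (div_nonneg (by linarith) hApos.le) (by linarith)
  by_cases hz1 : ‖z‖ < 1
  · have h1 : ‖z + (k:ℂ) - 1‖ ≤ ‖z‖ + (k - 1) := by
      have he : z + (k:ℂ) - 1 = z + ((k - 1 : ℝ) : ℂ) := by push_cast; ring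
      rw [he]
      refine le_trans (norm_add_le _ _) ?_
      rw [Complex.norm_real, Real.norm_eq_abs, abs_of_nonneg (by linarith)]
    linarith
  push_neg at hz1
  -- key algebraic identity by induction
  have key : ∀ m : ℕ, (z - 1) * ∑ j ∈ Finset.range (m+1), (a j : ℂ) * z^j
      = (a m : ℂ) * z^(m+1) - (a 0 : ℂ) + ∑ j ∈ Finset.range m, ((a j : ℂ) - a (j+1)) * z^(j+1) := by
    intro m
    induction m with
    | zero => simp; ring
    | succ m ih =>
      rw [Finset.sum_range_succ, mul_add, ih, Finset.sum_range_succ]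
      ring
  have hz' : (a n : ℂ) * z^(n+1) = (a 0 : ℂ) + ∑ j ∈ Finset.range n, ((a (j+1) : ℂ) - a j) * z^(j+1) := by
    have h := key n
    rw [hz, mul_zero] at h
    have hneg : ∑ j ∈ Finset.range n, ((a j:ℂ) - a (j+1))*z^(j+1)
        = -∑ j ∈ Finset.range n, ((a (j+1):ℂ) - a j)*z^(j+1) := by
      rw [← Finset.sum_neg_distrib]
      exact Finset.sum_congr rfl fun j _ => by ring
    rw [hneg] at h
    linear_combination -h
  -- relate sums with c and a
  set u : ℕ → ℝ := fun j => if j = 0 then (ρ - 1) * a 0 else 0 with hu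
  set v : ℕ → ℝ := fun j => if j = n then (k - 1) * a n else 0 with hv
  have hce : ∀ j, c j = a j + u j + v j := by
    intro j
    simp only [hc, hu, hv]
    split_ifs <;> first | (exfalso; omega) | (subst_vars; ring) | ring
  have hterm : ∀ j ∈ Finset.range n, ((c (j+1) - c j : ℝ):ℂ) * z^(j+1)
      = ((a (j+1):ℂ) - a j)*z^(j+1) + ((u (j+1):ℝ):ℂ)*z^(j+1) - ((u j:ℝ):ℂ)*z^(j+1)
        + ((v (j+1):ℝ):ℂ)*z^(j+1) - ((v j:ℝ):ℂ)*z^(j+1) := by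
    intro j _
    rw [hce (j+1), hce j]
    push_cast
    ring
  have hS1 : ∑ j ∈ Finset.range n, ((u (j+1):ℝ):ℂ)*z^(j+1) = 0 := by
    apply Finset.sum_eq_zero
    intro j _
    simp [hu, Nat.succ_ne_zero]
  have hS2 : ∑ j ∈ Finset.range n, ((u j:ℝ):ℂ)*z^(j+1) = ((ρ - 1) * a 0 : ℝ) * z := by
    rw [Finset.sum_eq_single_of_mem 0 (Finset.mem_range.mpr (by omega))]
    · simp [hu]
    · intro j _ hj0
      simp [hu, hj0]
  have hS3 : ∑ j ∈ Finset.range n, ((v (j+1):ℝ):ℂ)*z^(j+1) = ((k - 1) * a n : ℝ) * z^n := by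
    rw [Finset.sum_eq_single_of_mem (n-1) (Finset.mem_range.mpr (by omega))]
    · rw [show n - 1 + 1 = n by omega]
      simp [hv]
    · intro j hj hj0
      rw [Finset.mem_range] at hj
      have : j + 1 ≠ n := by omega
      simp [hv, this]
  have hS4 : ∑ j ∈ Finset.range n, ((v j:ℝ):ℂ)*z^(j+1) = 0 := by
    apply Finset.sum_eq_zero
    intro j hj
    rw [Finset.mem_range] at hj
    have : j ≠ n := by omega
    simp [hv, this]
  have hsum : ∑ j ∈ Finset.range n, ((c (j+1) - c j : ℝ) : ℂ) * z^(j+1)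
      = (∑ j ∈ Finset.range n, ((a (j+1) : ℂ) - a j) * z^(j+1))
        - ((ρ - 1) * a 0 : ℝ) * z + ((k-1)*a n : ℝ) * z^n := by
    rw [Finset.sum_congr rfl hterm]
    simp only [Finset.sum_sub_distrib, Finset.sum_add_distrib]
    rw [hS1, hS2, hS3, hS4]
    ring
  have main : (a n : ℂ) * z^n * (z + (k:ℂ) - 1)
      = (a 0 : ℂ) + ((ρ - 1) * a 0 : ℝ) * z
        + ∑ j ∈ Finset.range n, ((c (j+1) - c j : ℝ) : ℂ) * z^(j+1) := by
    rw [hsum]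
    have h1 : (a n : ℂ) * z^n * (z + (k:ℂ) - 1) = (a n : ℂ) * z^(n+1) + (((k-1)*a n : ℝ):ℂ) * z^n := by
      push_cast; ring
    rw [h1, hz']
    push_cast
    ring
  -- take absolute values
  have hP1 : (1:ℝ) ≤ ‖z‖ ^ n := by
    calc (1:ℝ) = 1^n := (one_pow n).symm
    _ ≤ ‖z‖ ^ n := by
      apply pow_le_pow_left₀ zero_le_one hz1
  have hpow : ∀ j ≤ n, ‖z‖ ^ j ≤ ‖z‖ ^ n := by
    intro j hj
    exact pow_le_pow_right₀ hz1 hj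
  have habs : a n * ‖z‖ ^ n * ‖z + (k:ℂ) - 1‖
      ≤ (a 0 + (1-ρ)*a 0 + (k*a n - ρ*a 0)) * ‖z‖ ^ n := by
    have e1 : a n * ‖z‖ ^ n * ‖z + (k:ℂ) - 1‖
        = ‖(a n : ℂ) * z^n * (z + (k:ℂ) - 1)‖ := by
      rw [norm_mul, norm_mul, Complex.norm_real, Real.norm_eq_abs, abs_of_pos hApos, norm_pow]
    rw [e1, main]
    refine le_trans (norm_add_le _ _) ?_
    have b1 : ‖(a 0 : ℂ) + ((ρ - 1) * a 0 : ℝ) * z‖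
        ≤ a 0 + (1-ρ)*a 0 * ‖z‖ := by
      refine le_trans (norm_add_le _ _) ?_
      rw [norm_mul, Complex.norm_real, Real.norm_eq_abs, Complex.norm_real, Real.norm_eq_abs,
        abs_of_nonneg ha0', abs_of_nonpos (by nlinarith)]
      have : -((ρ - 1) * a 0) = (1 - ρ) * a 0 := by ring
      rw [this]
    have b2 : ‖∑ j ∈ Finset.range n, ((c (j+1) - c j : ℝ) : ℂ) * z^(j+1)‖
        ≤ (k * a n - ρ * a 0) * ‖z‖ ^ n := by
      refine le_trans (norm_sum_le _ _) ?_
      have step : ∀ j ∈ Finset.range n,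
          ‖((c (j+1) - c j : ℝ) : ℂ) * z^(j+1)‖ ≤ (c (j+1) - c j) * ‖z‖ ^ n := by
        intro j hj
        rw [Finset.mem_range] at hj
        rw [norm_mul, Complex.norm_real, Real.norm_eq_abs, norm_pow,
          abs_of_nonneg (by linarith [hstep j hj])]
        apply mul_le_mul_of_nonneg_left (hpow (j+1) (by omega)) (by linarith [hstep j hj])
      refine le_trans (Finset.sum_le_sum step) ?_
      rw [← Finset.sum_mul, Finset.sum_range_sub c n, hc0, hcn]
    calc ‖(a 0 : ℂ) + ((ρ - 1) * a 0 : ℝ) * z‖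
          + ‖∑ j ∈ Finset.range n, ((c (j+1) - c j : ℝ) : ℂ) * z^(j+1)‖
        ≤ (a 0 + (1-ρ)*a 0 * ‖z‖) + (k * a n - ρ * a 0) * ‖z‖ ^ n := by
          linarith
      _ ≤ (a 0 + (1-ρ)*a 0 + (k*a n - ρ*a 0)) * ‖z‖ ^ n := by
          have h1 : a 0 ≤ a 0 * ‖z‖ ^ n := by nlinarith
          have h2 : (1-ρ)*a 0 * ‖z‖ ≤ (1-ρ)*a 0 * ‖z‖ ^ n := by
            have := hpow 1 hn
            rw [pow_one] at this
            apply mul_le_mul_of_nonneg_left this (by nlinarith)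
          nlinarith
  -- finish
  set X := ‖z + (k:ℂ) - 1‖ with hX
  set P := ‖z‖ ^ n with hP
  have hXnn : 0 ≤ X := norm_nonneg _
  have hfin : a n * X ≤ a 0 + (1-ρ)*a 0 + (k*a n - ρ*a 0) := by
    have hP0 : 0 < P := by linarith
    have := habs
    nlinarith
  have hgoal : X ≤ (2*a 0 - 2*ρ*a 0 + k*a n) / a n := by
    rw [le_div_iff₀ hApos]
    nlinarith
  have heq : (2*a 0 - 2*ρ*a 0 + k*a n) / a n = k + 2 * a 0 / a n * (1 - ρ) := by
    field_simp
    ring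
  rw [heq] at hgoal
  linarith
end

section
/- Let a_0, a_1, ..., a_n be real numbers with n ≥ 1 and let α, β be real numbers such that a_0 − β ≤ a_1 ≤ a_2 ≤ ... ≤ a_{n−1} ≤ a_n + α. Define the polynomial φ(z) = (a_n + α − a_{n−1})·z^n + (a_{n−1} − a_{n−2})·z^{n−1} + ... + (a_2 − a_1)·z^2 + (a_1 − a_0)·z + a_0. Then for every complex number z with |z| ≥ 1, one has |φ(z)| ≤ (a_n + α − a_0 + β + |β| + |a_0|)·|z|^n. -/
lemma tele_abs (a : ℕ → ℝ) :
    ∀ m : ℕ, 1 ≤ m → (∀ j, 2 ≤ j → j ≤ m → a (j - 1) ≤ a j) →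
    ∑ j ∈ Finset.Icc 1 m, |a j - a (j - 1)| = a m - a 1 + |a 1 - a 0| := by
  intro m
  induction m with
  | zero => omega
  | succ k ih =>
    intro _ hmono
    rcases Nat.eq_zero_or_pos k with hk | hk
    · subst hk
      simp
    · have h := hmono (k + 1) (by omega) le_rfl
      have h' : k + 1 - 1 = k := rfl
      rw [h'] at h
      rw [← Finset.Ico_add_one_right_eq_Icc, Finset.sum_Ico_succ_top (by omega), Finset.Ico_add_one_right_eq_Icc,
        ih hk (fun j h2 hj => hmono j h2 (by omega)), h',
        abs_of_nonneg (show (0:ℝ) ≤ a (k + 1) - a k by linarith)]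
      ring

/-- The bound `|φ(z)| ≤ (a n + α - a 0 + β + |β| + |a 0|) * |z|^n` for `|z| ≥ 1`, for the
auxiliary polynomial `φ(z) = (a n + α - a (n-1)) z^n + ∑_{j=1}^{n-1} (a j - a (j-1)) z^j + a 0`,
from the proof of Theorem 1. -/
theorem phi_bound_outside_circle (n : ℕ) (hn : 1 ≤ n) (a : ℕ → ℝ) (α β : ℝ)
    (hchain : ∀ j < n,
      (if j = 0 then a 0 - β else a j) ≤ (if j + 1 = n then a n + α else a (j + 1)))
    (z : ℂ) (hz : 1 ≤ ‖z‖) :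
    ‖((a n + α - a (n - 1) : ℝ) : ℂ) * z ^ n
        + (∑ j ∈ Finset.Icc 1 (n - 1), ((a j - a (j - 1) : ℝ) : ℂ) * z ^ j)
        + (a 0 : ℂ)‖ ≤ (a n + α - a 0 + β + |β| + |a 0|) * ‖z‖ ^ n := by
  set A := ‖z‖ with hA
  have hA1 : (1 : ℝ) ≤ A := hz
  have hA0 : (0 : ℝ) ≤ A := by linarith
  have hAn : (1 : ℝ) ≤ A ^ n := one_le_pow₀ hA1
  have hpow : ∀ j ∈ Finset.Icc 1 (n - 1), A ^ j ≤ A ^ n := by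
    intro j hj
    simp only [Finset.mem_Icc] at hj
    exact pow_le_pow_right₀ hA1 (by omega)
  -- triangle inequality step
  have e1 : ‖((a n + α - a (n - 1) : ℝ) : ℂ) * z ^ n‖
      = |a n + α - a (n - 1)| * A ^ n := by
    rw [norm_mul, norm_pow, Complex.norm_real, Real.norm_eq_abs]
  have e2 : ‖∑ j ∈ Finset.Icc 1 (n - 1), ((a j - a (j - 1) : ℝ) : ℂ) * z ^ j‖
      ≤ ∑ j ∈ Finset.Icc 1 (n - 1), |a j - a (j - 1)| * A ^ j := by
    refine le_trans (norm_sum_le _ _) (le_of_eq ?_)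
    refine Finset.sum_congr rfl fun j hj => ?_
    rw [norm_mul, norm_pow, Complex.norm_real, Real.norm_eq_abs]
  have e3 : ‖((a 0 : ℝ) : ℂ)‖ = |a 0| := Complex.norm_real _
  have h1 : ‖((a n + α - a (n - 1) : ℝ) : ℂ) * z ^ n
        + (∑ j ∈ Finset.Icc 1 (n - 1), ((a j - a (j - 1) : ℝ) : ℂ) * z ^ j)
        + (a 0 : ℂ)‖
      ≤ |a n + α - a (n - 1)| * A ^ n
        + (∑ j ∈ Finset.Icc 1 (n - 1), |a j - a (j - 1)| * A ^ j) + |a 0| := by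
    refine le_trans (norm_add_le _ _) ?_
    rw [e3]
    refine add_le_add_left (le_trans (norm_add_le _ _) ?_) _
    rw [e1]
    exact add_le_add_right e2 _
  -- pull out A^n from the sum part
  have h2 : (∑ j ∈ Finset.Icc 1 (n - 1), |a j - a (j - 1)| * A ^ j)
      ≤ (∑ j ∈ Finset.Icc 1 (n - 1), |a j - a (j - 1)|) * A ^ n := by
    rw [Finset.sum_mul]
    exact Finset.sum_le_sum fun j hj =>
      mul_le_mul_of_nonneg_left (hpow j hj) (abs_nonneg _)
  have h3 : |a 0| ≤ |a 0| * A ^ n := le_mul_of_one_le_right (abs_nonneg _) hAn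
  -- coefficient bound
  have hcoef : |a n + α - a (n - 1)| + (∑ j ∈ Finset.Icc 1 (n - 1), |a j - a (j - 1)|)
      ≤ a n + α - a 0 + β + |β| := by
    rcases eq_or_lt_of_le hn with h1' | h2'
    · -- n = 1
      have hn1 : n = 1 := h1'.symm
      subst hn1
      have hc := hchain 0 (by norm_num)
      simp at hc
      simp only [Nat.sub_self, show (1:ℕ) - 1 = 0 from rfl]
      rw [show Finset.Icc 1 0 = ∅ from rfl, Finset.sum_empty, add_zero]
      rcases abs_cases (a 1 + α - a 0) with ⟨he, _⟩ | ⟨he, _⟩ <;>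
        rcases abs_cases β with ⟨hb, _⟩ | ⟨hb, _⟩ <;> rw [he, hb] <;> linarith
    · -- n ≥ 2
      have hn2 : 2 ≤ n := h2'
      have hmono : ∀ j, 2 ≤ j → j ≤ n - 1 → a (j - 1) ≤ a j := by
        intro j hj2 hjn
        have hc := hchain (j - 1) (by omega)
        rw [if_neg (by omega), if_neg (by omega)] at hc
        have hjj : j - 1 + 1 = j := by omega
        rwa [hjj] at hc
      rw [tele_abs a (n - 1) (by omega) hmono]
      have hcn := hchain (n - 1) (by omega)
      rw [if_neg (by omega), if_pos (by omega)] at hcn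
      have hc0 := hchain 0 (by omega)
      rw [if_pos rfl, if_neg (by omega)] at hc0
      rw [abs_of_nonneg (show (0:ℝ) ≤ a n + α - a (n - 1) by linarith)]
      rcases abs_cases (a 1 - a 0) with ⟨he, _⟩ | ⟨he, _⟩ <;>
        rcases abs_cases β with ⟨hb, _⟩ | ⟨hb, _⟩ <;> rw [he, hb] <;> linarith
  have hAn0 : (0 : ℝ) ≤ A ^ n := by positivity
  calc ‖((a n + α - a (n - 1) : ℝ) : ℂ) * z ^ n
        + (∑ j ∈ Finset.Icc 1 (n - 1), ((a j - a (j - 1) : ℝ) : ℂ) * z ^ j)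
        + (a 0 : ℂ)‖
      ≤ |a n + α - a (n - 1)| * A ^ n
        + (∑ j ∈ Finset.Icc 1 (n - 1), |a j - a (j - 1)| * A ^ j) + |a 0| := h1
    _ ≤ |a n + α - a (n - 1)| * A ^ n
        + (∑ j ∈ Finset.Icc 1 (n - 1), |a j - a (j - 1)|) * A ^ n + |a 0| * A ^ n := by
        exact add_le_add (add_le_add_right h2 _) h3
    _ = (|a n + α - a (n - 1)| + (∑ j ∈ Finset.Icc 1 (n - 1), |a j - a (j - 1)|) + |a 0|)
        * A ^ n := by ring
    _ ≤ (a n + α - a 0 + β + |β| + |a 0|) * A ^ n := by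
        apply mul_le_mul_of_nonneg_right _ hAn0
        linarith
end

section
/- Let a_0, a_1, ..., a_n be real numbers with n ≥ 2, let t, s be real numbers, and let λ be an integer with 0 < λ < n such that a_0 − s ≤ a_1 ≤ a_2 ≤ ... ≤ a_{λ−1} ≤ a_λ and a_λ ≥ a_{λ+1} ≥ ... ≥ a_{n−1} ≥ a_n + t. Define the polynomial ψ(z) = −t·z^n + (a_{n−1} − a_{n−2})·z^{n−1} + ... + (a_2 − a_1)·z^2 + (a_1 − a_0)·z + a_0. Then for every complex number z with |z| = 1, one has |ψ(z)| ≤ |t| − a_{n−1} + 2·a_λ − a_0 + s + |s| + |a_0|. -/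
open Finset

lemma tele_sum (f : ℕ → ℝ) (m k : ℕ) (h : m ≤ k) :
    ∑ j ∈ Finset.Ioc m k, (f j - f (j - 1)) = f k - f m := by
  induction k, h using Nat.le_induction with
  | base => simp
  | succ k hk ih =>
      have h2 : Finset.Ioc k (k + 1) = {k + 1} := by
        ext x; simp only [Finset.mem_Ioc, Finset.mem_singleton]; omega
      rw [← Finset.sum_Ioc_consecutive _ hk (Nat.le_succ k), ih, h2,
        Finset.sum_singleton]
      have h3 : k + 1 - 1 = k := rfl
      rw [h3]; ring

/-- The bound `|ψ(z)| ≤ |t| - a (n-1) + 2 a λ - a 0 + s + |s| + |a 0|` on the unit circle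
for the auxiliary polynomial `ψ(z) = -t z^n + ∑_{j=1}^{n-1} (a j - a (j-1)) z^j + a 0`,
from the proof of Theorem 3. -/
theorem psi_bound_on_circle (n : ℕ) (hn : 2 ≤ n) (a : ℕ → ℝ) (t s : ℝ)
    (lam : ℕ) (hlam0 : 0 < lam) (hlamn : lam < n)
    (hup : ∀ j < lam, (if j = 0 then a 0 - s else a j) ≤ a (j + 1))
    (hdown : ∀ j, lam ≤ j → j < n → (if j + 1 = n then a n + t else a (j + 1)) ≤ a j)
    (z : ℂ) (hz : ‖z‖ = 1) :
    ‖((-t : ℝ) : ℂ) * z ^ n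
        + (∑ j ∈ Finset.Icc 1 (n - 1), ((a j - a (j - 1) : ℝ) : ℂ) * z ^ j)
        + (a 0 : ℂ)‖ ≤ |t| - a (n - 1) + 2 * a lam - a 0 + s + |s| + |a 0| := by
  have hzk : ∀ k : ℕ, ‖z ^ k‖ = 1 := by
    intro k; rw [norm_pow, hz, one_pow]
  have h1 : ‖((-t : ℝ) : ℂ) * z ^ n
        + (∑ j ∈ Finset.Icc 1 (n - 1), ((a j - a (j - 1) : ℝ) : ℂ) * z ^ j)
        + (a 0 : ℂ)‖ ≤ |t| + (∑ j ∈ Finset.Icc 1 (n - 1), |a j - a (j - 1)|) + |a 0| := by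
    refine le_trans (norm_add_le _ _) ?_
    gcongr ?_ + ?_
    · refine le_trans (norm_add_le _ _) ?_
      gcongr ?_ + ?_
      · rw [norm_mul, hzk, mul_one, Complex.norm_real, Real.norm_eq_abs, abs_neg]
      · refine le_trans (norm_sum_le _ _) ?_
        apply Finset.sum_le_sum
        intro j _
        rw [norm_mul, hzk, mul_one, Complex.norm_real, Real.norm_eq_abs]
    · rw [Complex.norm_real, Real.norm_eq_abs]
  -- now bound the real sum
  have hIcc : Finset.Icc 1 (n - 1) = Finset.Ioc 0 (n - 1) := by
    ext x; simp [Nat.lt_iff_add_one_le]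
  have h01 : (0 : ℕ) ≤ 1 := Nat.zero_le 1
  have h1lam : 1 ≤ lam := hlam0
  have hlamn1 : lam ≤ n - 1 := by omega
  have hsplit : ∑ j ∈ Finset.Ioc 0 (n - 1), |a j - a (j - 1)|
      = |a 1 - a 0| + ∑ j ∈ Finset.Ioc 1 lam, |a j - a (j - 1)|
        + ∑ j ∈ Finset.Ioc lam (n - 1), |a j - a (j - 1)| := by
    rw [← Finset.sum_Ioc_consecutive (fun j => |a j - a (j-1)|) (Nat.zero_le lam) hlamn1,
        ← Finset.sum_Ioc_consecutive (fun j => |a j - a (j-1)|) (Nat.zero_le 1) h1lam]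
    have h01' : Finset.Ioc 0 1 = {1} := rfl
    rw [h01', Finset.sum_singleton]
  have hmid : ∑ j ∈ Finset.Ioc 1 lam, |a j - a (j - 1)| = a lam - a 1 := by
    rw [← tele_sum a 1 lam h1lam]
    apply Finset.sum_congr rfl
    intro j hj
    simp only [Finset.mem_Ioc] at hj
    have h2 : a (j - 1) ≤ a j := by
      have := hup (j - 1) (by omega)
      rw [if_neg (by omega)] at this
      have hj1 : j - 1 + 1 = j := by omega
      rwa [hj1] at this
    rw [abs_of_nonneg (by linarith)]
  have hright : ∑ j ∈ Finset.Ioc lam (n - 1), |a j - a (j - 1)| = a lam - a (n - 1) := by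
    have : ∀ j ∈ Finset.Ioc lam (n - 1), |a j - a (j - 1)| = -(a j - a (j-1)) := by
      intro j hj
      simp only [Finset.mem_Ioc] at hj
      have h2 : a j ≤ a (j - 1) := by
        have := hdown (j - 1) (by omega) (by omega)
        rw [if_neg (by omega)] at this
        have hj1 : j - 1 + 1 = j := by omega
        rwa [hj1] at this
      rw [abs_of_nonpos (by linarith)]
    rw [Finset.sum_congr rfl this, Finset.sum_neg_distrib, tele_sum a lam (n-1) hlamn1]
    ring
  have hfirst : |a 1 - a 0| ≤ a 1 - a 0 + s + |s| := by
    have := hup 0 hlam0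
    rw [if_pos rfl] at this
    rcases abs_cases s with ⟨h, _⟩ | ⟨h, _⟩ <;> rcases abs_cases (a 1 - a 0) with ⟨h2, _⟩ | ⟨h2, _⟩ <;> linarith
  refine le_trans h1 ?_
  rw [hIcc, hsplit, hmid, hright]
  linarith
end

section
/- Let a_0, a_1, ..., a_n be real numbers with n ≥ 2, let t, s be real numbers, and let λ be an integer with 0 < λ < n such that a_0 − s ≤ a_1 ≤ a_2 ≤ ... ≤ a_{λ−1} ≤ a_λ and a_λ ≥ a_{λ+1} ≥ ... ≥ a_{n−1} ≥ a_n + t. Define the polynomial ψ(z) = −t·z^n + (a_{n−1} − a_{n−2})·z^{n−1} + ... + (a_2 − a_1)·z^2 + (a_1 − a_0)·z + a_0. Then for every complex number z with |z| ≥ 1, one has |ψ(z)| ≤ (|t| − a_{n−1} + 2·a_λ − a_0 + s + |s| + |a_0|)·|z|^n. -/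
lemma tele_up (a : ℕ → ℝ) (m : ℕ) : ∀ k, m ≤ k →
    (∀ j, m ≤ j → j < k → a j ≤ a (j + 1)) →
    ∑ j ∈ Finset.Ioc m k, |a j - a (j - 1)| = a k - a m := by
  intro k
  induction k with
  | zero =>
    intro h _
    have : m = 0 := Nat.le_zero.mp h
    subst this; simp
  | succ k ih =>
    intro hm hmono
    rcases Nat.lt_or_ge m (k + 1) with h | h
    · have hmk : m ≤ k := Nat.lt_succ_iff.mp h
      rw [Finset.sum_Ioc_succ_top hmk,
        ih hmk (fun j hj1 hj2 => hmono j hj1 (Nat.lt_succ_of_lt hj2))]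
      have hk := hmono k hmk (Nat.lt_succ_self k)
      simp only [Nat.add_sub_cancel]
      rw [abs_of_nonneg (by linarith)]
      ring
    · have : m = k + 1 := le_antisymm hm h
      subst this; simp

lemma tele_down (a : ℕ → ℝ) (m : ℕ) : ∀ k, m ≤ k →
    (∀ j, m ≤ j → j < k → a (j + 1) ≤ a j) →
    ∑ j ∈ Finset.Ioc m k, |a j - a (j - 1)| = a m - a k := by
  intro k
  induction k with
  | zero =>
    intro h _
    have : m = 0 := Nat.le_zero.mp h
    subst this; simp
  | succ k ih =>
    intro hm hmono
    rcases Nat.lt_or_ge m (k + 1) with h | h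
    · have hmk : m ≤ k := Nat.lt_succ_iff.mp h
      rw [Finset.sum_Ioc_succ_top hmk,
        ih hmk (fun j hj1 hj2 => hmono j hj1 (Nat.lt_succ_of_lt hj2))]
      have hk := hmono k hmk (Nat.lt_succ_self k)
      simp only [Nat.add_sub_cancel]
      rw [abs_of_nonpos (by linarith)]
      ring
    · have : m = k + 1 := le_antisymm hm h
      subst this; simp

/-- The bound `|ψ(z)| ≤ (|t| - a (n-1) + 2 a λ - a 0 + s + |s| + |a 0|) * |z|^n` for
`|z| ≥ 1`, for the auxiliary polynomial
`ψ(z) = -t z^n + ∑_{j=1}^{n-1} (a j - a (j-1)) z^j + a 0`, from the proof of Theorem 3. -/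
theorem psi_bound_outside_circle (n : ℕ) (hn : 2 ≤ n) (a : ℕ → ℝ) (t s : ℝ)
    (lam : ℕ) (hlam0 : 0 < lam) (hlamn : lam < n)
    (hup : ∀ j < lam, (if j = 0 then a 0 - s else a j) ≤ a (j + 1))
    (hdown : ∀ j, lam ≤ j → j < n → (if j + 1 = n then a n + t else a (j + 1)) ≤ a j)
    (z : ℂ) (hz : 1 ≤ ‖z‖) :
    ‖((-t : ℝ) : ℂ) * z ^ n
        + (∑ j ∈ Finset.Icc 1 (n - 1), ((a j - a (j - 1) : ℝ) : ℂ) * z ^ j)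
        + (a 0 : ℂ)‖ ≤
      (|t| - a (n - 1) + 2 * a lam - a 0 + s + |s| + |a 0|) * ‖z‖ ^ n := by
  set r := ‖z‖ with hr
  have hr1 : (1 : ℝ) ≤ r := hz
  have hr0 : (0 : ℝ) < r := lt_of_lt_of_le one_pos hr1
  have hrn : (1 : ℝ) ≤ r ^ n := one_le_pow₀ hr1
  -- Step 1: triangle inequality
  have h1 : ‖((-t : ℝ) : ℂ) * z ^ n
        + (∑ j ∈ Finset.Icc 1 (n - 1), ((a j - a (j - 1) : ℝ) : ℂ) * z ^ j)
        + (a 0 : ℂ)‖ ≤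
      |t| * r ^ n + (∑ j ∈ Finset.Icc 1 (n - 1), |a j - a (j - 1)| * r ^ j) + |a 0| := by
    refine (norm_add_le _ _).trans ?_
    have h11 : ‖((-t : ℝ) : ℂ) * z ^ n
        + (∑ j ∈ Finset.Icc 1 (n - 1), ((a j - a (j - 1) : ℝ) : ℂ) * z ^ j)‖ ≤
        |t| * r ^ n + (∑ j ∈ Finset.Icc 1 (n - 1), |a j - a (j - 1)| * r ^ j) := by
      refine (norm_add_le _ _).trans ?_
      gcongr
      · simp [norm_mul, Complex.norm_real, norm_pow, abs_neg, hr]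
      · refine (norm_sum_le _ _).trans ?_
        apply le_of_eq
        apply Finset.sum_congr rfl
        intro j _
        rw [norm_mul, Complex.norm_real, Real.norm_eq_abs, norm_pow]
    have h12 : ‖(a 0 : ℂ)‖ = |a 0| := by rw [Complex.norm_real, Real.norm_eq_abs]
    linarith
  -- Step 2: bound each power by r^n
  have h2 : |t| * r ^ n + (∑ j ∈ Finset.Icc 1 (n - 1), |a j - a (j - 1)| * r ^ j) + |a 0| ≤
      (|t| + (∑ j ∈ Finset.Icc 1 (n - 1), |a j - a (j - 1)|) + |a 0|) * r ^ n := by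
    rw [add_mul, add_mul, Finset.sum_mul]
    have hs : ∀ j ∈ Finset.Icc 1 (n - 1),
        |a j - a (j - 1)| * r ^ j ≤ |a j - a (j - 1)| * r ^ n := by
      intro j hj
      have hjn : j ≤ n := le_trans (Finset.mem_Icc.mp hj).2 (Nat.sub_le n 1)
      exact mul_le_mul_of_nonneg_left (pow_le_pow_right₀ hr1 hjn) (abs_nonneg _)
    have := Finset.sum_le_sum hs
    nlinarith [abs_nonneg (a 0), abs_nonneg t]
  -- Step 3: bound the sum of differences
  have hlamn1 : lam ≤ n - 1 := Nat.le_sub_one_of_lt hlamn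
  have h3 : (∑ j ∈ Finset.Icc 1 (n - 1), |a j - a (j - 1)|) ≤
      2 * a lam - a 0 - a (n - 1) + s + |s| := by
    have hIcc : Finset.Icc 1 (n - 1) = Finset.Ioc 0 (n - 1) := by
      rw [← Finset.Icc_add_one_left_eq_Ioc, zero_add]
    rw [hIcc]
    have hsplit1 : (∑ j ∈ Finset.Ioc 0 lam, |a j - a (j - 1)|)
        + (∑ j ∈ Finset.Ioc lam (n - 1), |a j - a (j - 1)|)
        = ∑ j ∈ Finset.Ioc 0 (n - 1), |a j - a (j - 1)| :=
      Finset.sum_Ioc_consecutive _ (Nat.zero_le _) hlamn1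
    have hsplit2 : (∑ j ∈ Finset.Ioc 0 1, |a j - a (j - 1)|)
        + (∑ j ∈ Finset.Ioc 1 lam, |a j - a (j - 1)|)
        = ∑ j ∈ Finset.Ioc 0 lam, |a j - a (j - 1)| :=
      Finset.sum_Ioc_consecutive _ (Nat.zero_le _) hlam0
    have hup' : ∑ j ∈ Finset.Ioc 1 lam, |a j - a (j - 1)| = a lam - a 1 := by
      apply tele_up a 1 lam hlam0
      intro j hj1 hj2
      have := hup j hj2
      rwa [if_neg (by omega)] at this
    have hdown' : ∑ j ∈ Finset.Ioc lam (n - 1), |a j - a (j - 1)| = a lam - a (n - 1) := by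
      apply tele_down a lam (n - 1) hlamn1
      intro j hj1 hj2
      have := hdown j hj1 (by omega)
      rwa [if_neg (by omega)] at this
    have hfirst : ∑ j ∈ Finset.Ioc 0 1, |a j - a (j - 1)| = |a 1 - a 0| := by
      simp
    have h10 : |a 1 - a 0| ≤ a 1 - a 0 + s + |s| := by
      have := hup 0 hlam0
      rw [if_pos rfl] at this
      rcases abs_cases (a 1 - a 0) with ⟨h, _⟩ | ⟨h, _⟩ <;>
        rcases abs_cases s with ⟨h2, _⟩ | ⟨h2, _⟩ <;> linarith
    rw [← hsplit1, ← hsplit2, hfirst, hup', hdown']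
    linarith
  have hcoef : |t| + (∑ j ∈ Finset.Icc 1 (n - 1), |a j - a (j - 1)|) + |a 0| ≤
      |t| - a (n - 1) + 2 * a lam - a 0 + s + |s| + |a 0| := by linarith
  calc ‖_‖ ≤ _ := h1
    _ ≤ (|t| + (∑ j ∈ Finset.Icc 1 (n - 1), |a j - a (j - 1)|) + |a 0|) * r ^ n := h2
    _ ≤ (|t| - a (n - 1) + 2 * a lam - a 0 + s + |s| + |a 0|) * r ^ n := by
        apply mul_le_mul_of_nonneg_right hcoef (by positivity)
end
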